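/- arXiv:2111.04311 — 3 statements merged into one kernel-verified Lean document; each statement's English description precedes it below -/
import Mathlib

section
/- Let Z be a nonnegative real random variable independent of an n-dimensional standard Gaussian vector N_n, A an invertible n×n real matrix, γ ∈ ℝⁿ with γ0 = A⁻¹γ ≠ 0, and X = γZ + √Z·A N_n. Let ρ be a law-invariant positively homogeneous risk functional on real random variables (ρ(λW) = λρ(W) for λ > 0 and ρ(W) = ρ(W') whenever W and W' are equal in distribution). Then for every ω ∈ ℝⁿ with x = Aᵀω ≠ 0, ρ(ωᵀX) = ‖x‖ · ρ( ‖γ0‖·cos[θ(γ0,x)]·Z + √Z·N ), where N is a scalar standard normal random variable independent of Z and cos[θ(γ0,x)] = ⟨x,γ0⟩/(‖x‖·‖γ0‖). -/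
/-!
Writing `x = Aᵀ w` and `γ = A γ0`, the portfolio return is `wᵀX = ⟨x, γ0⟩ Z + √Z ⟨x, Nn⟩`.
The linear combination `⟨x, Nn⟩` of independent standard normals is centred normal with
variance `‖x‖²`, i.e. distributed as `‖x‖ N`; since both are independent of `Z`, the pairs
`(Z, ⟨x, Nn⟩)` and `(Z, ‖x‖ N)` have the same law, hence so do `wᵀX` and
`‖x‖ (⟨x, γ0⟩ / ‖x‖ · Z + √Z N)`. Law invariance and positive homogeneity of `ρ` conclude.
-/

open MeasureTheory ProbabilityTheory
open scoped NNReal Matrix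

namespace ProbabilityTheory

variable {Ω ι : Type*} [MeasurableSpace Ω] {P : Measure Ω} [IsProbabilityMeasure P]

lemma iIndepFun.map_finsetSum_eq_gaussianReal {Y : ι → Ω → ℝ} (hY : ∀ i, Measurable (Y i))
    (hind : iIndepFun Y P) {m : ι → ℝ} {v : ι → ℝ≥0}
    (hlaw : ∀ i, P.map (Y i) = gaussianReal (m i) (v i)) (s : Finset ι) :
    P.map (∑ i ∈ s, Y i) = gaussianReal (∑ i ∈ s, m i) (∑ i ∈ s, v i) := by
  classical
  induction s using Finset.induction_on with
  | empty =>
    rw [Finset.sum_empty, Finset.sum_empty, Finset.sum_empty, gaussianReal_zero_var,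
      show (0 : Ω → ℝ) = fun _ => 0 from rfl, Measure.map_const, measure_univ, one_smul]
  | insert i s hi ih =>
    simp only [Finset.sum_insert hi]
    rw [add_comm (Y i), add_comm (m i), add_comm (v i)]
    exact gaussianReal_add_gaussianReal_of_indepFun
      (hind.indepFun_finsetSum_of_notMem hY hi) ih (hlaw i)

lemma iIndepFun.map_sum_mul_eq_gaussianReal [Fintype ι] {Y : ι → Ω → ℝ}
    (hY : ∀ i, Measurable (Y i)) (hind : iIndepFun Y P)
    (hlaw : ∀ i, P.map (Y i) = gaussianReal 0 1) (c : ι → ℝ) :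
    P.map (fun ω => ∑ i, c i * Y i ω) = gaussianReal 0 (.mk (∑ i, c i ^ 2) (by positivity)) := by
  have hcY : ∀ i, P.map (fun ω => c i * Y i ω) = gaussianReal 0 (.mk (c i ^ 2) (sq_nonneg _)) := by
    intro i
    simpa using (gaussianReal_const_mul ⟨(hY i).aemeasurable, hlaw i⟩ (c i)).map_eq
  have h := iIndepFun.map_finsetSum_eq_gaussianReal (fun i => (hY i).const_mul (c i))
    (hind.comp (fun i u => c i * u) fun i => measurable_const_mul (c i)) hcY Finset.univ
  rw [Finset.sum_const_zero] at h
  convert h using 2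
  · ext ω
    simp only [Finset.sum_apply]
  · ext
    simp

lemma identDistrib_sum_mul_sqrt_sum_sq_mul [Fintype ι] {Y : ι → Ω → ℝ} {N : Ω → ℝ}
    (hY : ∀ i, Measurable (Y i)) (hind : iIndepFun Y P)
    (hlaw : ∀ i, P.map (Y i) = gaussianReal 0 1) (hN : Measurable N)
    (hNlaw : P.map N = gaussianReal 0 1) (c : ι → ℝ) :
    IdentDistrib (fun ω => ∑ i, c i * Y i ω) (fun ω => √(∑ i, c i ^ 2) * N ω) P P where
  aemeasurable_fst := (Finset.measurable_sum _ fun i _ => (hY i).const_mul (c i)).aemeasurable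
  aemeasurable_snd := (hN.const_mul _).aemeasurable
  map_eq := by
    rw [hind.map_sum_mul_eq_gaussianReal hY hlaw,
      (gaussianReal_const_mul ⟨hN.aemeasurable, hNlaw⟩ _).map_eq, mul_zero, mul_one]
    congr
    exact (Real.sq_sqrt (by positivity)).symm

end ProbabilityTheory

lemma sum_sq_pos_of_ne_zero {ι : Type*} [Fintype ι] {v : ι → ℝ} (hv : v ≠ 0) :
    0 < ∑ i, v i ^ 2 := by
  obtain ⟨i, hi⟩ := Function.ne_iff.mp hv
  exact Finset.sum_pos' (fun j _ => sq_nonneg _) ⟨i, Finset.mem_univ _, sq_pos_iff.mpr hi⟩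

lemma sum_mul_mulVec_mul_add {ι : Type*} [Fintype ι] (A : Matrix ι ι ℝ) (w γ0 v : ι → ℝ)
    (z s : ℝ) :
    ∑ i, w i * ((A *ᵥ γ0) i * z + s * (A *ᵥ v) i)
      = (∑ i, (Aᵀ *ᵥ w) i * γ0 i) * z + s * ∑ i, (Aᵀ *ᵥ w) i * v i := by
  have hdot : ∀ u, ∑ i, w i * (A *ᵥ u) i = ∑ i, (Aᵀ *ᵥ w) i * u i := fun u => by
    rw [Matrix.mulVec_transpose]
    exact Matrix.dotProduct_mulVec w A u
  simp only [mul_add, Finset.sum_add_distrib, ← hdot, Finset.sum_mul, Finset.mul_sum]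
  congr 1 <;> exact Finset.sum_congr rfl fun i _ => by ring

theorem statement1_general {Ω : Type*} [MeasurableSpace Ω] (P : Measure Ω) [IsProbabilityMeasure P]
    {n : ℕ} (Z : Ω → ℝ) (Nn : Ω → Fin n → ℝ) (N : Ω → ℝ)
    (hZmeas : Measurable Z)
    (hNnmeas : Measurable Nn)
    (hNniid : iIndepFun (fun i ω => Nn ω i) P)
    (hNngauss : ∀ i, Measure.map (fun ω => Nn ω i) P = gaussianReal 0 1)
    (hindepZNn : IndepFun Z Nn P)
    (hNmeas : Measurable N)
    (hNgauss : Measure.map N P = gaussianReal 0 1)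
    (hindepZN : IndepFun Z N P)
    (A : Matrix (Fin n) (Fin n) ℝ) (hA : IsUnit A.det)
    (γ γ0 : Fin n → ℝ) (hγ0 : γ0 = A⁻¹.mulVec γ) (hγ0ne : γ0 ≠ 0)
    (X : Ω → Fin n → ℝ)
    (hX : ∀ ω i, X ω i = γ i * Z ω + Real.sqrt (Z ω) * A.mulVec (Nn ω) i)
    (ρ : (Ω → ℝ) → ℝ)
    (hρ_law : ∀ W W' : Ω → ℝ, Measure.map W P = Measure.map W' P → ρ W = ρ W')
    (hρ_hom : ∀ (W : Ω → ℝ) (c : ℝ), 0 < c → ρ (fun ω => c * W ω) = c * ρ W)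
    (w x : Fin n → ℝ) (hx : x = A.transpose.mulVec w) (hxne : x ≠ 0) :
    ρ (fun ω => ∑ i, w i * X ω i)
      = Real.sqrt (∑ i, x i ^ 2) *
        ρ (fun ω =>
            Real.sqrt (∑ i, γ0 i ^ 2) *
              ((∑ i, x i * γ0 i) /
                (Real.sqrt (∑ i, x i ^ 2) * Real.sqrt (∑ i, γ0 i ^ 2))) * Z ω
            + Real.sqrt (Z ω) * N ω) := by
  have hγ : γ = A *ᵥ γ0 := by
    rw [hγ0, Matrix.mulVec_mulVec, Matrix.mul_nonsing_inv _ hA, Matrix.one_mulVec]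
  subst hγ hx
  set x := Aᵀ *ᵥ w
  set c0 := ∑ i, x i * γ0 i
  have hreturn : (fun ω => ∑ i, w i * X ω i)
      = fun ω => c0 * Z ω + √(Z ω) * ∑ i, x i * Nn ω i := by
    funext ω
    simp only [hX]
    exact sum_mul_mulVec_mul_add A w γ0 (Nn ω) (Z ω) √(Z ω)
  have hS : IdentDistrib (fun ω => ∑ i, x i * Nn ω i) (fun ω => √(∑ i, x i ^ 2) * N ω) P P :=
    identDistrib_sum_mul_sqrt_sum_sq_mul (fun i => (measurable_pi_apply i).comp hNnmeas) hNniid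
      hNngauss hNmeas hNgauss x
  have hZS : IndepFun Z (fun ω => ∑ i, x i * Nn ω i) P :=
    hindepZNn.comp (ψ := fun v : Fin n → ℝ => ∑ i, x i * v i) measurable_id (by fun_prop)
  have hZN : IndepFun Z (fun ω => √(∑ i, x i ^ 2) * N ω) P :=
    hindepZN.comp (ψ := fun u => √(∑ i, x i ^ 2) * u) measurable_id (by fun_prop)
  have hmix : IdentDistrib (fun ω => c0 * Z ω + √(Z ω) * ∑ i, x i * Nn ω i)
      (fun ω => c0 * Z ω + √(Z ω) * (√(∑ i, x i ^ 2) * N ω)) P P :=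
    ((IdentDistrib.refl hZmeas.aemeasurable).prodMk hS hZS hZN).comp
      (u := fun p : ℝ × ℝ => c0 * p.1 + √p.1 * p.2) (by fun_prop)
  have hx_pos : 0 < √(∑ i, x i ^ 2) := Real.sqrt_pos.mpr (sum_sq_pos_of_ne_zero hxne)
  have hγ0_pos : 0 < √(∑ i, γ0 i ^ 2) := Real.sqrt_pos.mpr (sum_sq_pos_of_ne_zero hγ0ne)
  rw [hreturn, hρ_law _ _ hmix.map_eq, ← hρ_hom _ _ hx_pos]
  congr 1
  funext ω
  field_simp

/-- For a law-invariant positively homogeneous risk functional `ρ` and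
`X = γ Z + √Z · A Nn` with `γ0 = A⁻¹ γ ≠ 0`, for every portfolio `w` with `x = Aᵀ w ≠ 0`,
`ρ(wᵀX) = ‖x‖ · ρ(‖γ0‖ cos[θ(γ0,x)] Z + √Z N)` where `N` is a scalar standard normal
independent of `Z` and `cos[θ(γ0,x)] = ⟨x,γ0⟩ / (‖x‖ ‖γ0‖)`. -/
theorem statement1 {Ω : Type*} [MeasurableSpace Ω] (P : Measure Ω) [IsProbabilityMeasure P]
    {n : ℕ} (Z : Ω → ℝ) (Nn : Ω → Fin n → ℝ) (N : Ω → ℝ)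
    (hZmeas : Measurable Z) (hZnonneg : ∀ ω, 0 ≤ Z ω)
    (hNnmeas : Measurable Nn)
    (hNniid : iIndepFun (fun i ω => Nn ω i) P)
    (hNngauss : ∀ i, Measure.map (fun ω => Nn ω i) P = gaussianReal 0 1)
    (hindepZNn : IndepFun Z Nn P)
    (hNmeas : Measurable N)
    (hNgauss : Measure.map N P = gaussianReal 0 1)
    (hindepZN : IndepFun Z N P)
    (A : Matrix (Fin n) (Fin n) ℝ) (hA : IsUnit A.det)
    (γ γ0 : Fin n → ℝ) (hγ0 : γ0 = A⁻¹.mulVec γ) (hγ0ne : γ0 ≠ 0)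
    (X : Ω → Fin n → ℝ)
    (hX : ∀ ω i, X ω i = γ i * Z ω + Real.sqrt (Z ω) * A.mulVec (Nn ω) i)
    (ρ : (Ω → ℝ) → ℝ)
    (hρ_law : ∀ W W' : Ω → ℝ, Measure.map W P = Measure.map W' P → ρ W = ρ W')
    (hρ_hom : ∀ (W : Ω → ℝ) (c : ℝ), 0 < c → ρ (fun ω => c * W ω) = c * ρ W)
    (w x : Fin n → ℝ) (hx : x = A.transpose.mulVec w) (hxne : x ≠ 0) :
    ρ (fun ω => ∑ i, w i * X ω i)
      = Real.sqrt (∑ i, x i ^ 2) *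
        ρ (fun ω =>
            Real.sqrt (∑ i, γ0 i ^ 2) *
              ((∑ i, x i * γ0 i) /
                (Real.sqrt (∑ i, x i ^ 2) * Real.sqrt (∑ i, γ0 i ^ 2))) * Z ω
            + Real.sqrt (Z ω) * N ω) :=
  statement1_general P Z Nn N hZmeas hNnmeas hNniid hNngauss hindepZNn hNmeas hNgauss hindepZN A hA
    γ γ0 hγ0 hγ0ne X hX ρ hρ_law hρ_hom w x hx hxne
end

section
/- Let Z be a nonnegative real random variable with finite third moment, independent of an n-dimensional standard Gaussian vector N_n, let γ0 ∈ ℝⁿ, γ0 ≠ 0, and Y = γ0·Z + √Z·N_n. Then for every x ∈ ℝⁿ, x ≠ 0, the third central moment of ⟨x,Y⟩ equals ‖x‖³·( ‖γ0‖³φ³·m₃(Z) + 3‖γ0‖φ·Var(Z) ), where φ = ⟨x,γ0⟩/(‖x‖·‖γ0‖) and m₃(Z) = E[(Z − E Z)³]. Consequently, if Var(⟨x,Y⟩) > 0, the skewness of ⟨x,Y⟩ equals ( ‖γ0‖³φ³ m₃(Z) + 3‖γ0‖φ Var(Z) ) / ( ‖γ0‖²φ² Var(Z) + E[Z] )^{3/2}.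 -/
/-!
Write `G = ⟨x, Nn⟩`, `t = ‖x‖²` and `a = ⟨x, γ0⟩`. Independent Gaussians combine into a Gaussian,
so `G ~ N(0, t)`, and `⟨x, Y⟩ = a Z + √Z G` with `G` independent of `Z`. Centering at `a E[Z]` and
expanding binomially, every term factors as `E[(Z - E Z)^j √Z^k] E[G^k]`; the odd moments of `G`
vanish, and `√Z² = Z` turns the surviving terms into `a³ m₃(Z) + 3 a t Var Z` and, for the
variance, `a² Var Z + t E Z`. Finally `a = ‖x‖ ‖γ0‖ φ`.
-/

open MeasureTheory ProbabilityTheory Finset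
open scoped NNReal ENNReal

lemma MeasureTheory.MemLp.integrable_pow_of_le {α : Type*} {mα : MeasurableSpace α}
    {μ : Measure α} [IsFiniteMeasure μ] {f : α → ℝ} {p : ℝ≥0∞} {k : ℕ} (hf : MemLp f p μ)
    (hk : (k : ℝ≥0∞) ≤ p) : Integrable (fun x ↦ f x ^ k) μ :=
  (hf.mono_exponent hk).integrable_norm_pow'.mono'
    (hf.aestronglyMeasurable.pow k) (.of_forall fun x ↦ by simp [norm_pow])

lemma integral_pow_gaussianReal_zero_of_odd (v : ℝ≥0) {k : ℕ} (hk : Odd k) :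
    ∫ x, x ^ k ∂gaussianReal 0 v = 0 := by
  have h := integral_map (μ := gaussianReal 0 v) measurable_neg.aemeasurable
    (f := fun x : ℝ ↦ x ^ k) (by fun_prop)
  rw [gaussianReal_map_neg, neg_zero] at h
  simp only [hk.neg_pow, integral_neg] at h
  linarith

lemma integral_sq_gaussianReal_zero (v : ℝ≥0) : ∫ x, x ^ 2 ∂gaussianReal 0 v = v := by
  have h := variance_fun_id_gaussianReal (μ := 0) (v := v)
  rw [variance_eq_integral aemeasurable_id'] at h
  simpa [integral_id_gaussianReal] using h

lemma ProbabilityTheory.HasLaw.integral_pow_gaussianReal {Ω : Type*} {mΩ : MeasurableSpace Ω}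
    {P : Measure Ω} {G : Ω → ℝ} {μ : ℝ} {v : ℝ≥0} (hG : HasLaw G (gaussianReal μ v) P)
    (k : ℕ) : ∫ ω, G ω ^ k ∂P = ∫ x, x ^ k ∂gaussianReal μ v :=
  hG.integral_comp (f := fun x ↦ x ^ k) (by fun_prop)

lemma hasLaw_sum_mul_gaussianReal {Ω ι : Type*} {mΩ : MeasurableSpace Ω} {P : Measure Ω}
    [Fintype ι] {N : ι → Ω → ℝ} (hN : ∀ i, HasLaw (N i) (gaussianReal 0 1) P)
    (hind : iIndepFun N P) (x : ι → ℝ) :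
    HasLaw (fun ω ↦ ∑ i, x i * N i ω) (gaussianReal 0 (∑ i, x i ^ 2).toNNReal) P := by
  have hindx : iIndepFun (fun i ω ↦ x i * N i ω) P :=
    hind.comp (fun i y ↦ x i * y) fun i ↦ measurable_const_mul (x i)
  have hgauss : HasGaussianLaw (fun ω ↦ ∑ i, x i * N i ω) P :=
    hindx.hasGaussianLaw_fun_sum fun i ↦ (hN i).hasGaussianLaw.fun_smul (x i)
  refine ⟨hgauss.aemeasurable, ?_⟩
  rw [hgauss.map_eq_gaussianReal]
  congr
  · rw [integral_finsetSum _ fun i _ ↦ (hN i).hasGaussianLaw.integrable.const_mul (x i)]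
    simp [integral_const_mul, (hN _).integral_eq, integral_id_gaussianReal]
  · have hsum : (fun ω ↦ ∑ i, x i * N i ω) = ∑ i, fun ω ↦ x i * N i ω := by
      ext ω; simp
    rw [hsum, IndepFun.variance_sum (fun i _ ↦ (hN i).hasGaussianLaw.memLp_two.const_mul (x i))
      fun i _ j _ hij ↦ hindx.indepFun hij]
    simp [variance_const_mul, (hN _).variance_eq, variance_id_gaussianReal]

section MixtureMoments

variable {Ω : Type*} {mΩ : MeasurableSpace Ω} {P : Measure Ω} [IsProbabilityMeasure P]
  {Z G : Ω → ℝ}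

lemma integral_sub_integral_mul_self (hZ : MemLp Z 2 P) :
    ∫ ω, (Z ω - ∫ ω', Z ω' ∂P) * Z ω ∂P = Var[Z; P] := by
  have h : ∀ ω, (Z ω - ∫ ω', Z ω' ∂P) * Z ω = Z ω ^ 2 - (∫ ω', Z ω' ∂P) * Z ω :=
    fun ω ↦ by ring
  simp_rw [h]
  rw [integral_sub hZ.integrable_sq ((hZ.integrable one_le_two).const_mul _),
    integral_const_mul, variance_eq_sub hZ]
  simp [sq]

-- Each factor is dominated by `1 + |C| + Z ∈ L³`, which is at least `1`.
lemma integrable_sub_pow_mul_sqrt_pow (hZ0 : ∀ ω, 0 ≤ Z ω) (hZ : MemLp Z 3 P) (C : ℝ)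
    {j k : ℕ} (hjk : j + k ≤ 3) : Integrable (fun ω ↦ (Z ω - C) ^ j * √(Z ω) ^ k) P := by
  have hD : Integrable (fun ω ↦ (1 + |C| + Z ω) ^ 3) P :=
    ((memLp_const (1 + |C|)).add hZ).integrable_pow_of_le (by norm_num)
  refine hD.mono' ((by fun_prop : Continuous fun z ↦ (z - C) ^ j * √z ^ k)
    |>.comp_aestronglyMeasurable hZ.aestronglyMeasurable) (.of_forall fun ω ↦ ?_)
  have h0 := hZ0 ω
  have hsub : |Z ω - C| ≤ 1 + |C| + Z ω := by
    rw [abs_le]; constructor <;> linarith [le_abs_self C, neg_abs_le C]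
  have hsqrt : √(Z ω) ≤ 1 + |C| + Z ω := by
    nlinarith [Real.sq_sqrt h0, Real.sqrt_nonneg (Z ω), abs_nonneg C]
  calc ‖(Z ω - C) ^ j * √(Z ω) ^ k‖ = |Z ω - C| ^ j * √(Z ω) ^ k := by
        rw [Real.norm_eq_abs, abs_mul, abs_pow, abs_pow, abs_of_nonneg (Real.sqrt_nonneg _)]
    _ ≤ (1 + |C| + Z ω) ^ j * (1 + |C| + Z ω) ^ k := by gcongr
    _ = (1 + |C| + Z ω) ^ (j + k) := by rw [pow_add]
    _ ≤ (1 + |C| + Z ω) ^ 3 := pow_le_pow_right₀ (by linarith [abs_nonneg C]) hjk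

lemma integral_mul_sub_add_sqrt_mul_pow (hZ0 : ∀ ω, 0 ≤ Z ω) (hZ : MemLp Z 3 P)
    (hG : MemLp G 3 P) (hZG : IndepFun Z G P) (a C : ℝ) {m : ℕ} (hm : m ≤ 3) :
    ∫ ω, (a * (Z ω - C) + √(Z ω) * G ω) ^ m ∂P
      = ∑ k ∈ range (m + 1), a ^ k * m.choose k *
          ((∫ ω, (Z ω - C) ^ k * √(Z ω) ^ (m - k) ∂P) * ∫ ω, G ω ^ (m - k) ∂P) := by
  have hexpand : ∀ ω, (a * (Z ω - C) + √(Z ω) * G ω) ^ m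
      = ∑ k ∈ range (m + 1), a ^ k * m.choose k *
          ((Z ω - C) ^ k * √(Z ω) ^ (m - k) * G ω ^ (m - k)) := fun ω ↦ by
    rw [add_pow]
    exact sum_congr rfl fun k _ ↦ by rw [mul_pow, mul_pow]; ring
  have hindep : ∀ k, IndepFun (fun ω ↦ (Z ω - C) ^ k * √(Z ω) ^ (m - k))
      (fun ω ↦ G ω ^ (m - k)) P := fun k ↦
    hZG.comp (φ := fun z ↦ (z - C) ^ k * √z ^ (m - k)) (ψ := fun g ↦ g ^ (m - k))
      (by fun_prop) (by fun_prop)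
  have hZk : ∀ k ∈ range (m + 1), Integrable (fun ω ↦ (Z ω - C) ^ k * √(Z ω) ^ (m - k)) P :=
    fun k hk ↦ integrable_sub_pow_mul_sqrt_pow hZ0 hZ C (by grind)
  have hGk : ∀ k, Integrable (fun ω ↦ G ω ^ (m - k)) P :=
    fun k ↦ hG.integrable_pow_of_le (by exact_mod_cast (by omega : m - k ≤ 3))
  simp_rw [hexpand]
  rw [integral_finsetSum]
  · refine sum_congr rfl fun k hk ↦ ?_
    rw [integral_const_mul, (hindep k).integral_fun_mul_eq_mul_integral (hZk k hk).1 (hGk k).1]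
  · exact fun k hk ↦ ((hindep k).integrable_mul (hZk k hk) (hGk k)).const_mul _

variable {v : ℝ≥0} (hZ0 : ∀ ω, 0 ≤ Z ω) (hZ : MemLp Z 3 P)
  (hG : HasLaw G (gaussianReal 0 v) P) (hZG : IndepFun Z G P) (a : ℝ)
include hZ0 hZ hG hZG

lemma integral_mul_add_sqrt_mul :
    ∫ ω, (a * Z ω + √(Z ω) * G ω) ∂P = a * ∫ ω, Z ω ∂P := by
  have h := integral_mul_sub_add_sqrt_mul_pow hZ0 hZ (hG.hasGaussianLaw.memLp (by simp)) hZG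
    a 0 (m := 1) (by norm_num)
  have hG1 : ∫ ω, G ω ∂P = 0 := hG.integral_eq.trans integral_id_gaussianReal
  simp only [sum_range_succ, sum_range_zero, Nat.choose, hG1, pow_zero, pow_one, sub_zero,
    Nat.reduceAdd, tsub_zero, tsub_self, integral_const, probReal_univ, smul_eq_mul,
    one_mul, mul_one, Nat.cast_one] at h
  linear_combination h

lemma centralMoment_three_mul_add_sqrt_mul :
    centralMoment (fun ω ↦ a * Z ω + √(Z ω) * G ω) 3 P
      = a ^ 3 * centralMoment Z 3 P + 3 * a * v * Var[Z; P] := by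
  have h := integral_mul_sub_add_sqrt_mul_pow hZ0 hZ (hG.hasGaussianLaw.memLp (by simp)) hZG
    a (∫ ω', Z ω' ∂P) (m := 3) le_rfl
  have hG1 : ∫ ω, G ω ∂P = 0 := hG.integral_eq.trans integral_id_gaussianReal
  have hG2 : ∫ ω, G ω ^ 2 ∂P = v :=
    (hG.integral_pow_gaussianReal 2).trans (integral_sq_gaussianReal_zero v)
  have hG3 : ∫ ω, G ω ^ 3 ∂P = 0 :=
    (hG.integral_pow_gaussianReal 3).trans (integral_pow_gaussianReal_zero_of_odd v (by decide))
  have hsq : ∀ ω, √(Z ω) ^ 2 = Z ω := fun ω ↦ Real.sq_sqrt (hZ0 ω)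
  simp only [sum_range_succ, sum_range_zero, Nat.choose, hG1, hG2, hG3, hsq, pow_zero, pow_one,
    Nat.reduceAdd, Nat.reduceSub, tsub_zero, tsub_self, integral_const, probReal_univ, smul_eq_mul,
    one_mul, mul_one, Nat.cast_one] at h
  simp only [centralMoment, Pi.pow_apply, Pi.sub_apply]
  rw [integral_mul_add_sqrt_mul hZ0 hZ hG hZG]
  simp_rw [show ∀ ω, a * Z ω + √(Z ω) * G ω - a * ∫ ω', Z ω' ∂P
    = a * (Z ω - ∫ ω', Z ω' ∂P) + √(Z ω) * G ω from fun ω ↦ by ring]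
  rw [h, integral_sub_integral_mul_self (hZ.mono_exponent (by norm_num))]
  ring

lemma variance_mul_add_sqrt_mul :
    Var[fun ω ↦ a * Z ω + √(Z ω) * G ω; P] = a ^ 2 * Var[Z; P] + v * ∫ ω, Z ω ∂P := by
  have h := integral_mul_sub_add_sqrt_mul_pow hZ0 hZ (hG.hasGaussianLaw.memLp (by simp)) hZG
    a (∫ ω', Z ω' ∂P) (m := 2) (by norm_num)
  have hG1 : ∫ ω, G ω ∂P = 0 := hG.integral_eq.trans integral_id_gaussianReal
  have hG2 : ∫ ω, G ω ^ 2 ∂P = v :=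
    (hG.integral_pow_gaussianReal 2).trans (integral_sq_gaussianReal_zero v)
  have hsq : ∀ ω, √(Z ω) ^ 2 = Z ω := fun ω ↦ Real.sq_sqrt (hZ0 ω)
  simp only [sum_range_succ, sum_range_zero, Nat.choose, hG1, hG2, hsq, pow_zero, pow_one,
    Nat.reduceAdd, Nat.reduceSub, tsub_zero, tsub_self, integral_const, probReal_univ, smul_eq_mul,
    one_mul, mul_one, Nat.cast_one] at h
  have hW : AEMeasurable (fun ω ↦ a * Z ω + √(Z ω) * G ω) P := by
    have := hZ.aestronglyMeasurable.aemeasurable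
    have := hG.aemeasurable
    fun_prop
  rw [variance_eq_integral hW, integral_mul_add_sqrt_mul hZ0 hZ hG hZG]
  simp_rw [show ∀ ω, a * Z ω + √(Z ω) * G ω - a * ∫ ω', Z ω' ∂P
    = a * (Z ω - ∫ ω', Z ω' ∂P) + √(Z ω) * G ω from fun ω ↦ by ring]
  rw [h, variance_eq_integral hZ.aestronglyMeasurable.aemeasurable]
  ring

end MixtureMoments

-- Also valid when `f` or `g` vanishes: then `∑ f g = 0` by Cauchy–Schwarz, matching `x / 0 = 0`.
lemma sqrt_mul_sqrt_mul_div_eq_sum_mul {ι : Type*} (s : Finset ι) (f g : ι → ℝ) :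
    √(∑ i ∈ s, f i ^ 2) * √(∑ i ∈ s, g i ^ 2)
      * ((∑ i ∈ s, f i * g i) / (√(∑ i ∈ s, f i ^ 2) * √(∑ i ∈ s, g i ^ 2)))
      = ∑ i ∈ s, f i * g i := by
  by_cases h : √(∑ i ∈ s, f i ^ 2) * √(∑ i ∈ s, g i ^ 2) = 0
  · have hsq : (∑ i ∈ s, f i * g i) ^ 2 ≤ 0 :=
      calc (∑ i ∈ s, f i * g i) ^ 2 ≤ (∑ i ∈ s, f i ^ 2) * ∑ i ∈ s, g i ^ 2 :=
            sum_mul_sq_le_sq_mul_sq s f g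
        _ = (√(∑ i ∈ s, f i ^ 2) * √(∑ i ∈ s, g i ^ 2)) ^ 2 := by
            rw [mul_pow, Real.sq_sqrt (by positivity), Real.sq_sqrt (by positivity)]
        _ = 0 := by rw [h, zero_pow two_ne_zero]
    rw [h, zero_mul, pow_eq_zero_iff two_ne_zero |>.mp (le_antisymm hsq (sq_nonneg _))]
  · exact mul_div_cancel₀ _ h

lemma sqrt_pow_three_mul_div_mul_rpow {t y : ℝ} (ht : 0 < t) (hy : 0 ≤ y) (c : ℝ) :
    √t ^ 3 * c / (t * y) ^ ((3 : ℝ) / 2) = c / y ^ ((3 : ℝ) / 2) := by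
  have hst : √t ^ 3 = t ^ ((3 : ℝ) / 2) := by
    rw [Real.sqrt_eq_rpow, ← Real.rpow_natCast, ← Real.rpow_mul ht.le]
    norm_num
  rw [Real.mul_rpow ht.le hy, hst, mul_div_mul_left _ _ (Real.rpow_pos_of_pos ht _).ne']

theorem statement3_general {Ω : Type*} [MeasurableSpace Ω] (P : Measure Ω) [IsProbabilityMeasure P]
    {n : ℕ} (Z : Ω → ℝ) (Nn : Ω → Fin n → ℝ)
    (hZnonneg : ∀ ω, 0 ≤ Z ω) (hZ3 : MemLp Z 3 P)
    (hNniid : iIndepFun (fun i ω => Nn ω i) P)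
    (hNngauss : ∀ i, Measure.map (fun ω => Nn ω i) P = gaussianReal 0 1)
    (hindepZNn : IndepFun Z Nn P)
    (γ0 : Fin n → ℝ) (x : Fin n → ℝ)
    (W : Ω → ℝ) (hW : W = fun ω => ∑ i, x i * (γ0 i * Z ω + Real.sqrt (Z ω) * Nn ω i))
    (b φ : ℝ) (hb : b = Real.sqrt (∑ i, γ0 i ^ 2))
    (hφ : φ = (∑ i, x i * γ0 i) / (Real.sqrt (∑ i, x i ^ 2) * Real.sqrt (∑ i, γ0 i ^ 2))) :
    (∫ ω, (W ω - ∫ ω', W ω' ∂P) ^ 3 ∂P)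
      = Real.sqrt (∑ i, x i ^ 2) ^ 3 *
        (b ^ 3 * φ ^ 3 * (∫ ω, (Z ω - ∫ ω', Z ω' ∂P) ^ 3 ∂P) + 3 * b * φ * variance Z P) ∧
    (0 < variance W P →
      (∫ ω, (W ω - ∫ ω', W ω' ∂P) ^ 3 ∂P) / variance W P ^ ((3 : ℝ) / 2)
        = (b ^ 3 * φ ^ 3 * (∫ ω, (Z ω - ∫ ω', Z ω' ∂P) ^ 3 ∂P) + 3 * b * φ * variance Z P)
          / (b ^ 2 * φ ^ 2 * variance Z P + ∫ ω, Z ω ∂P) ^ ((3 : ℝ) / 2)) := by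
  set t := ∑ i, x i ^ 2
  set a := ∑ i, x i * γ0 i
  have ht : 0 ≤ t := by positivity
  have hst : √t ^ 2 = t := Real.sq_sqrt ht
  have ha : √t * b * φ = a := by rw [hb, hφ]; exact sqrt_mul_sqrt_mul_div_eq_sum_mul _ x γ0
  have hG : HasLaw (fun ω ↦ ∑ i, x i * Nn ω i) (gaussianReal 0 t.toNNReal) P :=
    hasLaw_sum_mul_gaussianReal
      (fun i ↦ ⟨.of_map_ne_zero (hNngauss i ▸ IsProbabilityMeasure.ne_zero _), hNngauss i⟩)
      hNniid x
  have hZG : IndepFun Z (fun ω ↦ ∑ i, x i * Nn ω i) P :=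
    hindepZNn.comp measurable_id (by fun_prop : Measurable fun y : Fin n → ℝ ↦ ∑ i, x i * y i)
  have hWa : W = fun ω ↦ a * Z ω + √(Z ω) * ∑ i, x i * Nn ω i := by
    rw [hW]; ext ω
    rw [sum_mul, mul_sum, ← sum_add_distrib]
    exact sum_congr rfl fun i _ ↦ by ring
  have hmoment := centralMoment_three_mul_add_sqrt_mul hZnonneg hZ3 hG hZG a
  have hvar := variance_mul_add_sqrt_mul hZnonneg hZ3 hG hZG a
  rw [← hWa, Real.coe_toNNReal _ ht] at hmoment hvar
  have hcube : (∫ ω, (W ω - ∫ ω', W ω' ∂P) ^ 3 ∂P) = √t ^ 3 *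
      (b ^ 3 * φ ^ 3 * (∫ ω, (Z ω - ∫ ω', Z ω' ∂P) ^ 3 ∂P) + 3 * b * φ * variance Z P) := by
    change centralMoment W 3 P = √t ^ 3 *
      (b ^ 3 * φ ^ 3 * centralMoment Z 3 P + 3 * b * φ * variance Z P)
    rw [hmoment, ← ha]
    linear_combination (3 * √t * b * φ * variance Z P) * hst.symm
  refine ⟨hcube, fun hWpos ↦ ?_⟩
  have hvarW : variance W P = t * (b ^ 2 * φ ^ 2 * variance Z P + ∫ ω, Z ω ∂P) := by
    rw [hvar, ← ha]
    linear_combination (b * φ) ^ 2 * variance Z P * hst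
  have hY : 0 ≤ b ^ 2 * φ ^ 2 * variance Z P + ∫ ω, Z ω ∂P :=
    add_nonneg (by have := variance_nonneg Z P; positivity) (integral_nonneg hZnonneg)
  have htpos : 0 < t := pos_of_mul_pos_left (hvarW ▸ hWpos) hY
  rw [hcube, hvarW, sqrt_pow_three_mul_div_mul_rpow htpos hY]

/-- For `Y = γ0 Z + √Z Nn` with `Z` nonnegative with finite third moment,
independent of the standard Gaussian vector `Nn`, `γ0 ≠ 0`, and any `x ≠ 0`, the third central
moment of `⟨x,Y⟩` equals `‖x‖³ (‖γ0‖³ φ³ m₃(Z) + 3 ‖γ0‖ φ Var(Z))`, where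
`φ = ⟨x,γ0⟩/(‖x‖‖γ0‖)` and `m₃(Z) = E[(Z − E Z)³]`; consequently, if `Var(⟨x,Y⟩) > 0`, the
skewness of `⟨x,Y⟩` equals
`(‖γ0‖³ φ³ m₃(Z) + 3‖γ0‖ φ Var(Z)) / (‖γ0‖² φ² Var(Z) + E[Z])^(3/2)`. -/
theorem statement3 {Ω : Type*} [MeasurableSpace Ω] (P : Measure Ω) [IsProbabilityMeasure P]
    {n : ℕ} (Z : Ω → ℝ) (Nn : Ω → Fin n → ℝ)
    (hZmeas : Measurable Z) (hZnonneg : ∀ ω, 0 ≤ Z ω) (hZ3 : MemLp Z 3 P)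
    (hNnmeas : Measurable Nn)
    (hNniid : iIndepFun (fun i ω => Nn ω i) P)
    (hNngauss : ∀ i, Measure.map (fun ω => Nn ω i) P = gaussianReal 0 1)
    (hindepZNn : IndepFun Z Nn P)
    (γ0 : Fin n → ℝ) (hγ0ne : γ0 ≠ 0) (x : Fin n → ℝ) (hxne : x ≠ 0)
    (W : Ω → ℝ) (hW : W = fun ω => ∑ i, x i * (γ0 i * Z ω + Real.sqrt (Z ω) * Nn ω i))
    (b φ : ℝ) (hb : b = Real.sqrt (∑ i, γ0 i ^ 2))
    (hφ : φ = (∑ i, x i * γ0 i) / (Real.sqrt (∑ i, x i ^ 2) * Real.sqrt (∑ i, γ0 i ^ 2))) :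
    (∫ ω, (W ω - ∫ ω', W ω' ∂P) ^ 3 ∂P)
      = Real.sqrt (∑ i, x i ^ 2) ^ 3 *
        (b ^ 3 * φ ^ 3 * (∫ ω, (Z ω - ∫ ω', Z ω' ∂P) ^ 3 ∂P) + 3 * b * φ * variance Z P) ∧
    (0 < variance W P →
      (∫ ω, (W ω - ∫ ω', W ω' ∂P) ^ 3 ∂P) / variance W P ^ ((3 : ℝ) / 2)
        = (b ^ 3 * φ ^ 3 * (∫ ω, (Z ω - ∫ ω', Z ω' ∂P) ^ 3 ∂P) + 3 * b * φ * variance Z P)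
          / (b ^ 2 * φ ^ 2 * variance Z P + ∫ ω, Z ω ∂P) ^ ((3 : ℝ) / 2)) :=
  statement3_general P Z Nn hZnonneg hZ3 hNniid hNngauss hindepZNn γ0 x W hW b φ hb hφ
end

section
/- Let b > 0, V ≥ 0, E > 0, and m₃ be real numbers satisfying m₃·E ≥ 2V², and define S : [−1,1] → ℝ by S(φ) = ( b³m₃φ³ + 3bVφ ) / ( b²Vφ² + E )^{3/2}. Then S is monotone nondecreasing on [−1,1]. -/
/-!
Writing `S = N / D ^ (3/2)`, the quotient rule gives `S' = D ^ (1/2) (N' D - (3/2) N D') / D ^ 3`,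
and for the skewness numerator and denominator
`N' D - (3/2) N D' = 3 b³ φ² (m₃ E - 2 V²) + 3 b V E`, which is nonnegative since `m₃ E ≥ 2 V²`.
So `S` is in fact nondecreasing on all of `ℝ`.
-/

open Real

theorem monotone_div_rpow_of_hasDerivAt {N D N' D' : ℝ → ℝ} {p : ℝ}
    (hN : ∀ x, HasDerivAt N (N' x) x) (hD : ∀ x, HasDerivAt D (D' x) x)
    (hD_pos : ∀ x, 0 < D x) (h : ∀ x, p * N x * D' x ≤ N' x * D x) :
    Monotone fun x => N x / D x ^ p := by
  have hquot : ∀ x, HasDerivAt (fun x => N x / D x ^ p)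
      ((N' x * D x ^ p - N x * (D' x * p * D x ^ (p - 1))) / (D x ^ p) ^ 2) x := fun x =>
    (hN x).div ((hD x).rpow_const (Or.inl (hD_pos x).ne')) (rpow_pos_of_pos (hD_pos x) p).ne'
  refine monotone_of_deriv_nonneg (fun x => (hquot x).differentiableAt) fun x => ?_
  rw [(hquot x).deriv]
  have hnum : N' x * D x ^ p - N x * (D' x * p * D x ^ (p - 1))
      = D x ^ (p - 1) * (N' x * D x - p * N x * D' x) := by
    rw [show D x ^ p = D x ^ (p - 1) * D x by rw [← rpow_add_one (hD_pos x).ne', sub_add_cancel]]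
    ring
  have := rpow_pos_of_pos (hD_pos x) (p - 1)
  have := h x
  rw [hnum]
  positivity

/-- For `b > 0`, `V ≥ 0`, `E > 0`, `m₃ ∈ ℝ` with `m₃ E ≥ 2 V²`, the skewness
function `S(φ) = (b³ m₃ φ³ + 3 b V φ) / (b² V φ² + E)^(3/2)` is monotone nondecreasing on
`[−1,1]`. -/
theorem statement6 (b V E m₃ : ℝ) (hb : 0 < b) (hV : 0 ≤ V) (hE : 0 < E)
    (hkey : 2 * V ^ 2 ≤ m₃ * E) :
    MonotoneOn
      (fun φ : ℝ => (b ^ 3 * m₃ * φ ^ 3 + 3 * b * V * φ)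
        / (b ^ 2 * V * φ ^ 2 + E) ^ ((3 : ℝ) / 2))
      (Set.Icc (-1 : ℝ) 1) := by
  have hN (x : ℝ) : HasDerivAt (fun φ : ℝ => b ^ 3 * m₃ * φ ^ 3 + 3 * b * V * φ)
      (b ^ 3 * m₃ * (3 * x ^ 2) + 3 * b * V) x := by
    have h := ((hasDerivAt_pow 3 x).const_mul (b ^ 3 * m₃)).add
      ((hasDerivAt_id' x).const_mul (3 * b * V))
    norm_num at h
    exact h
  have hD (x : ℝ) : HasDerivAt (fun φ : ℝ => b ^ 2 * V * φ ^ 2 + E) (b ^ 2 * V * (2 * x)) x := by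
    simpa using ((hasDerivAt_pow 2 x).const_mul (b ^ 2 * V)).add_const E
  have hD_pos (x : ℝ) : 0 < b ^ 2 * V * x ^ 2 + E := by positivity
  refine (monotone_div_rpow_of_hasDerivAt hN hD hD_pos fun x => ?_).monotoneOn _
  have hdiff : (b ^ 3 * m₃ * (3 * x ^ 2) + 3 * b * V) * (b ^ 2 * V * x ^ 2 + E)
      - 3 / 2 * (b ^ 3 * m₃ * x ^ 3 + 3 * b * V * x) * (b ^ 2 * V * (2 * x))
      = 3 * b ^ 3 * x ^ 2 * (m₃ * E - 2 * V ^ 2) + 3 * b * V * E := by ring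
  have hkey' : 0 ≤ m₃ * E - 2 * V ^ 2 := by linarith
  have : 0 ≤ 3 * b ^ 3 * x ^ 2 * (m₃ * E - 2 * V ^ 2) + 3 * b * V * E := by positivity
  linarith
end
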